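/- arXiv:1210.6781 — 4 statements merged into one kernel-verified Lean document; each statement's English description precedes it below -/
import Mathlib

section
/- Let (F_s)_{s≥0} be a filtration on a probability space and let (ζ_s)_{s≥0} be an (F_s)-adapted ℤ-valued process with right-continuous sample paths such that ζ_0 = x almost surely, where x ≤ 0 is an integer. Let θ > 0 and α > 0 satisfy μ := αθ − 2(cosh θ − 1) > 0, and assume that the process M_s := exp(θ ζ_s − 2(cosh θ − 1)s) is an (F_s)-martingale. Then for every t ≥ 0, P(there exists s ≥ t with ζ_s ≥ α s) ≤ e^{θx} e^{−μt}. -/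
/-!
On the crossing event there is a time `s ≥ t` with `θ ζ_s - 2 (cosh θ - 1) s ≥ μ s ≥ μ t`, so the
nonnegative martingale `M_s = exp (θ ζ_s - 2 (cosh θ - 1) s)` reaches the level `e^{μ t}`.
Doob's maximal inequality bounds the probability of that by `E M_0 / e^{μ t} = e^{θ x} e^{-μ t}`.
It holds over finite sets of times (list them in increasing order and use the discrete-time
inequality), hence over a dense sequence of times, hence over all times: by right-continuity,
wherever `M ≥ c` some time of the sequence has `M > c'`, for every `c' < c`.
-/

open MeasureTheory Filter
open scoped NNReal ENNReal

namespace MeasureTheory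

variable {Ω ι κ : Type*} {mΩ : MeasurableSpace Ω}

def Filtration.precomp [Preorder ι] [Preorder κ] (𝓕 : Filtration ι mΩ) {τ : κ → ι}
    (hτ : Monotone τ) : Filtration κ mΩ :=
  ⟨fun k => 𝓕 (τ k), fun _ _ hkl => 𝓕.mono (hτ hkl), fun _ => 𝓕.le _⟩

variable {ℙ : Measure Ω} {M : ι → Ω → ℝ}

theorem Martingale.precomp [Preorder ι] [Preorder κ] {𝓕 : Filtration ι mΩ}
    (hM : Martingale M 𝓕 ℙ) {τ : κ → ι} (hτ : Monotone τ) :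
    Martingale (fun k => M (τ k)) (𝓕.precomp hτ) ℙ :=
  ⟨fun k => hM.1 (τ k), fun _ _ hkl => hM.2 _ _ (hτ hkl)⟩

variable [IsFiniteMeasure ℙ] [LinearOrder ι] {𝓕 : Filtration ι mΩ}

theorem Martingale.integral_eq (hM : Martingale M 𝓕 ℙ) (i j : ι) :
    ∫ ω, M i ω ∂ℙ = ∫ ω, M j ω ∂ℙ := by
  wlog hij : i ≤ j generalizing i j
  · exact (this j i (le_of_not_ge hij)).symm
  exact (integral_congr_ae (hM.2 i j hij)).symm.trans (integral_condExp (𝓕.le i))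

theorem Martingale.maximal_ineq_finset (hM : Martingale M 𝓕 ℙ) (hnonneg : 0 ≤ M)
    (F : Finset ι) (c : ℝ≥0) (i : ι) :
    c * ℙ {ω | ∃ s ∈ F, (c : ℝ) ≤ M s ω} ≤ ENNReal.ofReal (∫ ω, M i ω ∂ℙ) := by
  rcases F.eq_empty_or_nonempty with rfl | hF
  · simp
  obtain ⟨n, hn⟩ : ∃ n, F.card = n + 1 := Nat.exists_eq_succ_of_ne_zero hF.card_pos.ne'
  set τ : ℕ → ι := fun k => F.orderEmbOfFin hn (Fin.clamp k n)
  have hτ : Monotone τ := fun k l hkl =>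
    (F.orderEmbOfFin hn).monotone (by simp only [Fin.clamp, Fin.mk_le_mk]; omega)
  have hsub : {ω | ∃ s ∈ F, (c : ℝ) ≤ M s ω} ⊆
      {ω | (c : ℝ) ≤ (Finset.range (n + 1)).sup' Finset.nonempty_range_add_one
        fun k => M (τ k) ω} := by
    rintro ω ⟨s, hs, hcs⟩
    obtain ⟨k, rfl⟩ : s ∈ Set.range (F.orderEmbOfFin hn) := by
      rwa [Finset.range_orderEmbOfFin]
    refine (Finset.le_sup'_iff (f := fun k => M (τ k) ω) _).2
      ⟨(k : ℕ), Finset.mem_range.2 k.2, ?_⟩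
    have hk : Fin.clamp k n = k := Fin.ext (min_eq_left (Nat.le_of_lt_succ k.2))
    simpa [τ, hk] using hcs
  calc c * ℙ {ω | ∃ s ∈ F, (c : ℝ) ≤ M s ω}
      ≤ c * ℙ {ω | (c : ℝ) ≤ (Finset.range (n + 1)).sup' Finset.nonempty_range_add_one
          fun k => M (τ k) ω} := by gcongr
    _ ≤ ENNReal.ofReal (∫ ω in {ω | (c : ℝ) ≤ (Finset.range (n + 1)).sup'
          Finset.nonempty_range_add_one fun k => M (τ k) ω}, M (τ n) ω ∂ℙ) :=
        maximal_ineq (hM.precomp hτ).submartingale (fun k => hnonneg (τ k)) n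
    _ ≤ ENNReal.ofReal (∫ ω, M (τ n) ω ∂ℙ) :=
        ENNReal.ofReal_le_ofReal <| setIntegral_le_integral (hM.integrable _)
          (Eventually.of_forall fun ω => hnonneg _ ω)
    _ = ENNReal.ofReal (∫ ω, M i ω ∂ℙ) := by rw [hM.integral_eq]

theorem Martingale.maximal_ineq_seq (hM : Martingale M 𝓕 ℙ) (hnonneg : 0 ≤ M)
    (e : ℕ → ι) (c : ℝ≥0) (i : ι) :
    c * ℙ {ω | ∃ k, (c : ℝ) ≤ M (e k) ω} ≤ ENNReal.ofReal (∫ ω, M i ω ∂ℙ) := by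
  have hunion : {ω | ∃ k, (c : ℝ) ≤ M (e k) ω} =
      ⋃ n, {ω | ∃ s ∈ (Finset.range n).image e, (c : ℝ) ≤ M s ω} := by
    ext ω
    simp only [Set.mem_ofPred_eq, Set.mem_iUnion, Finset.mem_image, Finset.mem_range]
    exact ⟨fun ⟨k, hk⟩ => ⟨k + 1, e k, ⟨k, k.lt_succ_self, rfl⟩, hk⟩,
      fun ⟨_, _, ⟨k, _, rfl⟩, hk⟩ => ⟨k, hk⟩⟩
  have hmono : Monotone fun n => {ω | ∃ s ∈ (Finset.range n).image e, (c : ℝ) ≤ M s ω} :=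
    fun m n hmn ω ⟨s, hs, hcs⟩ =>
      ⟨s, Finset.image_subset_image (Finset.range_subset_range.2 hmn) hs, hcs⟩
  rw [hunion, hmono.measure_iUnion, ENNReal.mul_iSup]
  exact iSup_le fun n => hM.maximal_ineq_finset hnonneg _ c i

theorem Martingale.maximal_ineq_of_rightContinuous [TopologicalSpace ι] [OrderTopology ι]
    [DenselyOrdered ι] [NoMaxOrder ι] [TopologicalSpace.SeparableSpace ι]
    (hM : Martingale M 𝓕 ℙ) (hnonneg : 0 ≤ M)
    (hrc : ∀ ω s, ContinuousWithinAt (fun u => M u ω) (Set.Ici s) s) (c : ℝ≥0) (i : ι) :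
    c * ℙ {ω | ∃ s, (c : ℝ) ≤ M s ω} ≤ ENNReal.ofReal (∫ ω, M i ω ∂ℙ) := by
  have : Nonempty ι := ⟨i⟩
  obtain ⟨u, hu⟩ := TopologicalSpace.exists_dense_seq ι
  have hlt : ∀ c' < c, c' * ℙ {ω | ∃ s, (c : ℝ) ≤ M s ω} ≤ ENNReal.ofReal (∫ ω, M i ω ∂ℙ) := by
    intro c' hc'
    have hsub : {ω | ∃ s, (c : ℝ) ≤ M s ω} ⊆ {ω | ∃ k, (c' : ℝ) ≤ M (u k) ω} := by
      rintro ω ⟨s, hs⟩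
      have hev : ∀ᶠ v in nhdsWithin s (Set.Ioi s), (c' : ℝ) < M v ω :=
        ((hrc ω s).mono Set.Ioi_subset_Ici_self).eventually
          (Ioi_mem_nhds ((NNReal.coe_lt_coe.2 hc').trans_le hs))
      obtain ⟨b, hb, hsb⟩ := mem_nhdsGT_iff_exists_Ioo_subset.1 hev
      obtain ⟨_, ⟨k, rfl⟩, hk⟩ := hu.exists_between hb
      exact ⟨k, (hsb hk).le⟩
    calc (c' : ℝ≥0∞) * ℙ {ω | ∃ s, (c : ℝ) ≤ M s ω}
        ≤ c' * ℙ {ω | ∃ k, (c' : ℝ) ≤ M (u k) ω} := by gcongr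
      _ ≤ _ := hM.maximal_ineq_seq hnonneg u c' i
  refine ENNReal.le_of_forall_lt_one_mul_le fun a ha => ?_
  lift a to ℝ≥0 using ha.ne_top
  rcases eq_or_ne c 0 with rfl | hc
  · simp
  rw [← mul_assoc, ← ENNReal.coe_mul]
  exact hlt _ (mul_lt_of_lt_one_left (pos_iff_ne_zero.2 hc) (by exact_mod_cast ha))

end MeasureTheory

open Real

theorem stmt_0_general
    {Ω : Type*} {mΩ : MeasurableSpace Ω} {ℙ : Measure Ω} [IsProbabilityMeasure ℙ]
    (𝓕 : Filtration ℝ≥0 mΩ)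
    (ζ : ℝ≥0 → Ω → ℤ)
    (hrc : ∀ ω : Ω, ∀ s : ℝ≥0, ContinuousWithinAt (fun u => ζ u ω) (Set.Ici s) s)
    (x : ℤ)
    (h0 : ∀ᵐ ω ∂ℙ, ζ 0 ω = x)
    (θ α : ℝ) (hθ : 0 < θ)
    (hμ : 0 < α * θ - 2 * (Real.cosh θ - 1))
    (hM : Martingale
      (fun (s : ℝ≥0) (ω : Ω) =>
        Real.exp (θ * (ζ s ω : ℝ) - 2 * (Real.cosh θ - 1) * (s : ℝ))) 𝓕 ℙ)
    (t : ℝ≥0) :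
    ℙ {ω | ∃ s : ℝ≥0, t ≤ s ∧ α * (s : ℝ) ≤ (ζ s ω : ℝ)} ≤
      ENNReal.ofReal
        (Real.exp (θ * (x : ℝ)) *
          Real.exp (-(α * θ - 2 * (Real.cosh θ - 1)) * (t : ℝ))) := by
  set μ := α * θ - 2 * (cosh θ - 1)
  set M : ℝ≥0 → Ω → ℝ := fun s ω => exp (θ * (ζ s ω : ℝ) - 2 * (cosh θ - 1) * (s : ℝ))
  set c : ℝ≥0 := (exp (μ * t)).toNNReal
  have hc : (c : ℝ) = exp (μ * t) := coe_toNNReal _ (exp_pos _).le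
  have hM0 : ∫ ω, M 0 ω ∂ℙ = exp (θ * x) := by
    have hζ0 : M 0 =ᵐ[ℙ] fun _ => exp (θ * x) := h0.mono fun ω hω => by simp [M, hω]
    rw [integral_congr_ae hζ0, integral_const, probReal_univ, one_smul]
  have hMrc : ∀ ω s, ContinuousWithinAt (fun u => M u ω) (Set.Ici s) s :=
    fun ω s => ContinuousWithinAt.rexp <|
      ((continuous_of_discreteTopology.continuousAt.comp_continuousWithinAt (hrc ω s)).const_mul
        θ).sub (NNReal.continuous_coe.continuousWithinAt.const_mul _)
  have hcross : {ω | ∃ s : ℝ≥0, t ≤ s ∧ α * (s : ℝ) ≤ (ζ s ω : ℝ)} ⊆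
      {ω | ∃ s, (c : ℝ) ≤ M s ω} := by
    rintro ω ⟨s, hts, hαs⟩
    refine ⟨s, hc ▸ exp_le_exp.2 ?_⟩
    have := mul_le_mul_of_nonneg_left hαs hθ.le
    have := mul_le_mul_of_nonneg_left (NNReal.coe_le_coe.2 hts) hμ.le
    linarith
  have hmax := hM.maximal_ineq_of_rightContinuous (fun s ω => (exp_pos _).le) hMrc c 0
  have hc0 : (c : ℝ≥0∞) ≠ 0 := by simpa [c] using exp_pos _
  calc ℙ {ω | ∃ s : ℝ≥0, t ≤ s ∧ α * (s : ℝ) ≤ (ζ s ω : ℝ)}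
      ≤ ENNReal.ofReal (exp (θ * x)) / c := by
        rw [ENNReal.le_div_iff_mul_le (.inl hc0) (.inl ENNReal.coe_ne_top), mul_comm, ← hM0]
        exact le_trans (by gcongr) hmax
    _ = _ := by
        rw [ENNReal.coe_nnreal_eq, hc, ← ENNReal.ofReal_div_of_pos (exp_pos _), div_eq_mul_inv,
          ← exp_neg, neg_mul]

/-- **Lemma 2 of Bérard–Ramírez.** Exponential-martingale crossing estimate: if
`ζ` is an adapted, right-continuous `ℤ`-valued process started at `x ≤ 0` whose
exponential process `exp (θ ζ_s - 2(cosh θ - 1) s)` is a martingale, and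
`μ := α θ - 2 (cosh θ - 1) > 0`, then for every `t ≥ 0` the probability that the
process reaches the line of slope `α` at some time `s ≥ t` is at most
`e^{θ x} e^{-μ t}`. -/
theorem stmt_0
    {Ω : Type*} {mΩ : MeasurableSpace Ω} {ℙ : Measure Ω} [IsProbabilityMeasure ℙ]
    (𝓕 : Filtration ℝ≥0 mΩ)
    (ζ : ℝ≥0 → Ω → ℤ)
    (hadapt : Adapted 𝓕 ζ)
    (hrc : ∀ ω : Ω, ∀ s : ℝ≥0, ContinuousWithinAt (fun u => ζ u ω) (Set.Ici s) s)
    (x : ℤ) (hx : x ≤ 0)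
    (h0 : ∀ᵐ ω ∂ℙ, ζ 0 ω = x)
    (θ α : ℝ) (hθ : 0 < θ) (hα : 0 < α)
    (hμ : 0 < α * θ - 2 * (Real.cosh θ - 1))
    (hM : Martingale
      (fun (s : ℝ≥0) (ω : Ω) =>
        Real.exp (θ * (ζ s ω : ℝ) - 2 * (Real.cosh θ - 1) * (s : ℝ))) 𝓕 ℙ)
    (t : ℝ≥0) :
    ℙ {ω | ∃ s : ℝ≥0, t ≤ s ∧ α * (s : ℝ) ≤ (ζ s ω : ℝ)} ≤
      ENNReal.ofReal
        (Real.exp (θ * (x : ℝ)) *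
          Real.exp (-(α * θ - 2 * (Real.cosh θ - 1)) * (t : ℝ))) :=
  stmt_0_general 𝓕 ζ hrc x h0 θ α hθ hμ hM t
end

section
/- Let (F_s)_{s≥0} be a filtration on a probability space, let I be a countable index set, and for each i ∈ I let (ζ^i_s)_{s≥0} be an (F_s)-adapted ℤ-valued process with right-continuous sample paths and ζ^i_0 = x_i almost surely, where x_i ≤ 0 are integers with φ := Σ_{i∈I} e^{θ x_i} < ∞. Let θ > 0 and α > 0 satisfy μ := αθ − 2(cosh θ − 1) > 0, and assume that for each i the process exp(θ ζ^i_s − 2(cosh θ − 1)s) is an (F_s)-martingale. Then for every t ≥ 0, P(there exist i ∈ I and s ≥ t with ζ^i_s ≥ α s) ≤ φ e^{−μt}. -/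
open MeasureTheory Filter Set
open scoped NNReal ENNReal

/-!
For each `i`, the martingale `exp (θ ζ^i_s - c s)` with `c = 2 (cosh θ - 1)` is nonnegative,
right-continuous and has mean `e^{θ x_i}`, and it is at least `e^{μ t}` at any time `s ≥ t` with
`α s ≤ ζ^i_s`. Doob's maximal inequality bounds the probability that it ever reaches `e^{μ t}`
by `e^{θ x_i} e^{-μ t}`; a union bound over `i` gives the claim. Doob's inequality in continuous
time follows from the discrete one on the dyadic grids `{j / 2^n : j ≤ 4^n}`, which increase with
`n` and, by right-continuity, detect every strict exceedance.
-/

theorem NNReal.exists_dyadic_mem_Ico {s u : ℝ≥0} (hsu : s < u) :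
    ∃ n j : ℕ, j ≤ 4 ^ n ∧ (j / 2 ^ n : ℝ≥0) ∈ Ico s u := by
  obtain ⟨n, hn⟩ := pow_unbounded_of_one_lt (max ((s : ℝ) + 1) (1 / ((u : ℝ) - s)))
    (by norm_num : (1 : ℝ) < 2)
  have hgap : (0 : ℝ) < u - s := sub_pos.2 hsu
  have hpos : (0 : ℝ) < 2 ^ n := by positivity
  have hs : (s : ℝ) + 1 < 2 ^ n := (le_max_left _ _).trans_lt hn
  have hmesh : 1 < ((u : ℝ) - s) * 2 ^ n := by
    rw [← div_lt_iff₀' hgap]; exact (le_max_right _ _).trans_lt hn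
  set j := ⌈(s : ℝ) * 2 ^ n⌉₊
  have hj_ge : (s : ℝ) * 2 ^ n ≤ j := Nat.le_ceil _
  have hj_lt : (j : ℝ) < s * 2 ^ n + 1 := Nat.ceil_lt_add_one (by positivity)
  refine ⟨n, j, ?_, ?_, ?_⟩
  · have : (j : ℝ) < 4 ^ n := by
      rw [show (4 : ℝ) ^ n = 2 ^ n * 2 ^ n by rw [← mul_pow]; norm_num]
      nlinarith
    exact_mod_cast this.le
  · rw [← NNReal.coe_le_coe]; push_cast; rw [le_div_iff₀ hpos]; exact hj_ge
  · rw [← NNReal.coe_lt_coe]; push_cast; rw [div_lt_iff₀ hpos]; linarith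

namespace MeasureTheory

variable {Ω ι κ : Type*} {m : MeasurableSpace Ω} {ℙ : Measure Ω}

def Filtration.comp [Preorder ι] [Preorder κ] (𝓕 : Filtration ι m) {τ : κ → ι}
    (hτ : Monotone τ) : Filtration κ m where
  seq k := 𝓕 (τ k)
  mono' _ _ h := 𝓕.mono (hτ h)
  le' k := 𝓕.le (τ k)

theorem Submartingale.comp_monotone [Preorder ι] [Preorder κ] {𝓕 : Filtration ι m}
    {M : ι → Ω → ℝ} (hM : Submartingale M 𝓕 ℙ) {τ : κ → ι} (hτ : Monotone τ) :
    Submartingale (fun k => M (τ k)) (𝓕.comp hτ) ℙ :=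
  ⟨fun k => hM.stronglyAdapted (τ k), fun _ _ h => hM.ae_le_condExp (hτ h),
    fun k => hM.integrable (τ k)⟩

theorem Submartingale.maximal_ineq_of_monotone [Preorder ι] [IsFiniteMeasure ℙ]
    {𝓕 : Filtration ι m} {M : ι → Ω → ℝ} (hM : Submartingale M 𝓕 ℙ) (hnn : 0 ≤ M)
    {τ : ℕ → ι} (hτ : Monotone τ) (ε : ℝ≥0) (n : ℕ) :
    ε * ℙ {ω | ∃ j ≤ n, (ε : ℝ) ≤ M (τ j) ω} ≤ ENNReal.ofReal (∫ ω, M (τ n) ω ∂ℙ) := by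
  have hset : {ω | ∃ j ≤ n, (ε : ℝ) ≤ M (τ j) ω} =
      {ω | (ε : ℝ) ≤ (Finset.range (n + 1)).sup' Finset.nonempty_range_add_one
        fun j => M (τ j) ω} := by
    ext ω
    simp [Finset.le_sup'_iff]
  rw [hset]
  refine (maximal_ineq (hM.comp_monotone hτ) (fun j ω => hnn (τ j) ω) n).trans ?_
  exact ENNReal.ofReal_le_ofReal <| setIntegral_le_integral (hM.integrable _)
    (Eventually.of_forall fun ω => hnn _ ω)

section RightContinuous

variable [IsFiniteMeasure ℙ] {𝓕 : Filtration ℝ≥0 m} {M : ℝ≥0 → Ω → ℝ}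

theorem monotone_setOf_exists_dyadic_le (ε : ℝ) :
    Monotone fun n : ℕ => {ω | ∃ j : ℕ, j ≤ 4 ^ n ∧ ε ≤ M (j / 2 ^ n) ω} := by
  refine monotone_nat_of_le_succ fun n ω ⟨j, hj, hle⟩ => ⟨2 * j, ?_, ?_⟩
  · rw [pow_succ]; omega
  · have hdouble : ((2 * j : ℕ) : ℝ≥0) / 2 ^ (n + 1) = j / 2 ^ n := by
      rw [pow_succ]; push_cast; field_simp
    rwa [hdouble]

theorem setOf_exists_lt_subset_iUnion_dyadic
    (hrc : ∀ ω s, ContinuousWithinAt (M · ω) (Ici s) s) (ε : ℝ) :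
    {ω | ∃ s, ε < M s ω} ⊆ ⋃ n : ℕ, {ω | ∃ j : ℕ, j ≤ 4 ^ n ∧ ε ≤ M (j / 2 ^ n) ω} := by
  rintro ω ⟨s, hs⟩
  obtain ⟨u, hsu, hu⟩ := (mem_nhdsGE_iff_exists_Ico_subset).1 (hrc ω s (Ioi_mem_nhds hs))
  obtain ⟨n, j, hj, hmem⟩ := NNReal.exists_dyadic_mem_Ico hsu
  exact mem_iUnion.2 ⟨n, j, hj, (hu hmem).le⟩

theorem Martingale.maximal_ineq_lt_of_continuousWithinAt (hM : Martingale M 𝓕 ℙ)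
    (hnn : 0 ≤ M) (hrc : ∀ ω s, ContinuousWithinAt (M · ω) (Ici s) s) (ε : ℝ≥0) :
    ε * ℙ {ω | ∃ s, (ε : ℝ) < M s ω} ≤ ENNReal.ofReal (∫ ω, M 0 ω ∂ℙ) := by
  have hdyadic (n : ℕ) : ε * ℙ {ω | ∃ j : ℕ, j ≤ 4 ^ n ∧ (ε : ℝ) ≤ M (j / 2 ^ n) ω} ≤
      ENNReal.ofReal (∫ ω, M 0 ω ∂ℙ) := by
    have hτ : Monotone fun j : ℕ => (j / 2 ^ n : ℝ≥0) := fun i j hij => by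
      dsimp only; gcongr
    refine (hM.submartingale.maximal_ineq_of_monotone hnn hτ ε (4 ^ n)).trans_eq ?_
    rw [← setIntegral_univ, ← hM.setIntegral_eq zero_le MeasurableSet.univ, setIntegral_univ]
  calc ε * ℙ {ω | ∃ s, (ε : ℝ) < M s ω}
      ≤ ε * ℙ (⋃ n : ℕ, {ω | ∃ j : ℕ, j ≤ 4 ^ n ∧ (ε : ℝ) ≤ M (j / 2 ^ n) ω}) :=
        mul_le_mul_right (measure_mono (setOf_exists_lt_subset_iUnion_dyadic hrc ε)) _
    _ = ⨆ n : ℕ, ε * ℙ {ω | ∃ j : ℕ, j ≤ 4 ^ n ∧ (ε : ℝ) ≤ M (j / 2 ^ n) ω} := by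
        rw [(monotone_setOf_exists_dyadic_le (ε : ℝ)).measure_iUnion, ENNReal.mul_iSup]
    _ ≤ ENNReal.ofReal (∫ ω, M 0 ω ∂ℙ) := iSup_le hdyadic

theorem Martingale.maximal_ineq_of_continuousWithinAt (hM : Martingale M 𝓕 ℙ)
    (hnn : 0 ≤ M) (hrc : ∀ ω s, ContinuousWithinAt (M · ω) (Ici s) s) (ε : ℝ≥0) :
    ε * ℙ {ω | ∃ s, (ε : ℝ) ≤ M s ω} ≤ ENNReal.ofReal (∫ ω, M 0 ω ∂ℙ) := by
  rcases eq_or_ne ε 0 with rfl | hε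
  · simp
  refine ENNReal.le_of_forall_lt_one_mul_le fun a ha => ?_
  lift a to ℝ≥0 using ha.ne_top
  have haε : a * ε < ε := mul_lt_of_lt_one_left (pos_iff_ne_zero.2 hε) (by exact_mod_cast ha)
  calc (a : ℝ≥0∞) * (ε * ℙ {ω | ∃ s, (ε : ℝ) ≤ M s ω})
      ≤ ((a * ε : ℝ≥0) : ℝ≥0∞) * ℙ {ω | ∃ s, ((a * ε : ℝ≥0) : ℝ) < M s ω} := by
        rw [← mul_assoc, ← ENNReal.coe_mul]
        gcongr
    _ ≤ ENNReal.ofReal (∫ ω, M 0 ω ∂ℙ) :=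
        hM.maximal_ineq_lt_of_continuousWithinAt hnn hrc _

end RightContinuous

theorem measure_exists_line_le_le_of_martingale_exp [IsProbabilityMeasure ℙ]
    {𝓕 : Filtration ℝ≥0 m} {θ α c : ℝ} (hθ : 0 ≤ θ) (hμ : 0 ≤ α * θ - c)
    {Z : ℝ≥0 → Ω → ℤ} (hrc : ∀ ω s, ContinuousWithinAt (Z · ω) (Ici s) s)
    {x : ℤ} (h0 : ∀ᵐ ω ∂ℙ, Z 0 ω = x)
    (hM : Martingale (fun s ω => Real.exp (θ * (Z s ω : ℝ) - c * (s : ℝ))) 𝓕 ℙ) (t : ℝ≥0) :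
    ℙ {ω | ∃ s : ℝ≥0, t ≤ s ∧ α * (s : ℝ) ≤ (Z s ω : ℝ)} ≤
      ENNReal.ofReal (Real.exp (θ * x) * Real.exp (-(α * θ - c) * t)) := by
  set C := Real.exp ((α * θ - c) * t)
  have hC : 0 < C := Real.exp_pos _
  have hsub : {ω | ∃ s : ℝ≥0, t ≤ s ∧ α * (s : ℝ) ≤ (Z s ω : ℝ)} ⊆
      {ω | ∃ s, C ≤ Real.exp (θ * (Z s ω : ℝ) - c * (s : ℝ))} := by
    rintro ω ⟨s, hts, hline⟩
    refine ⟨s, Real.exp_le_exp.2 ?_⟩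
    -- `(αθ - c) t ≤ (αθ - c) s ≤ θ Z_s - c s`
    have hts' : (t : ℝ) ≤ s := hts
    nlinarith [mul_le_mul_of_nonneg_left hline hθ]
  have hM_rc : ∀ ω s, ContinuousWithinAt
      (fun u : ℝ≥0 => Real.exp (θ * (Z u ω : ℝ) - c * (u : ℝ))) (Ici s) s := fun ω s =>
    have hcast : ContinuousWithinAt (fun u => (Z u ω : ℝ)) (Ici s) s :=
      (continuous_of_discreteTopology (f := Int.cast (R := ℝ))).continuousAt
        |>.comp_continuousWithinAt (hrc ω s)
    ((continuousWithinAt_const.mul hcast).sub (by fun_prop)).rexp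
  have hM_zero :
      ∫ ω, Real.exp (θ * (Z 0 ω : ℝ) - c * ((0 : ℝ≥0) : ℝ)) ∂ℙ = Real.exp (θ * x) := by
    rw [integral_congr_ae (g := fun _ => Real.exp (θ * x)) (h0.mono fun ω hω => by simp [hω])]
    simp
  have hmax := hM.maximal_ineq_of_continuousWithinAt (fun _ _ => (Real.exp_pos _).le) hM_rc
    C.toNNReal
  rw [hM_zero, Real.coe_toNNReal _ hC.le] at hmax
  calc ℙ {ω | ∃ s : ℝ≥0, t ≤ s ∧ α * (s : ℝ) ≤ (Z s ω : ℝ)}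
      ≤ ENNReal.ofReal (Real.exp (θ * x)) / ENNReal.ofReal C := by
        rw [ENNReal.le_div_iff_mul_le (Or.inl (ENNReal.ofReal_pos.2 hC).ne')
          (Or.inl ENNReal.ofReal_ne_top), mul_comm]
        exact (mul_le_mul_right (measure_mono hsub) _).trans hmax
    _ = ENNReal.ofReal (Real.exp (θ * x) * Real.exp (-(α * θ - c) * t)) := by
        rw [← ENNReal.ofReal_div_of_pos hC, div_eq_mul_inv, ← Real.exp_neg, neg_mul]

end MeasureTheory

theorem stmt_1_general
    {Ω : Type*} {mΩ : MeasurableSpace Ω} {ℙ : Measure Ω} [IsProbabilityMeasure ℙ]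
    (𝓕 : Filtration ℝ≥0 mΩ)
    {I : Type*} [Countable I]
    (θ α : ℝ) (hθ : 0 < θ)
    (hμ : 0 < α * θ - 2 * (Real.cosh θ - 1))
    (ζ : I → ℝ≥0 → Ω → ℤ)
    (hrc : ∀ i : I, ∀ ω : Ω, ∀ s : ℝ≥0,
      ContinuousWithinAt (fun u => ζ i u ω) (Set.Ici s) s)
    (x : I → ℤ)
    (h0 : ∀ i : I, ∀ᵐ ω ∂ℙ, ζ i 0 ω = x i)
    (hφ : Summable (fun i => Real.exp (θ * (x i : ℝ))))
    (hM : ∀ i : I, Martingale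
      (fun (s : ℝ≥0) (ω : Ω) =>
        Real.exp (θ * (ζ i s ω : ℝ) - 2 * (Real.cosh θ - 1) * (s : ℝ))) 𝓕 ℙ)
    (t : ℝ≥0) :
    ℙ {ω | ∃ i : I, ∃ s : ℝ≥0, t ≤ s ∧ α * (s : ℝ) ≤ (ζ i s ω : ℝ)} ≤
      ENNReal.ofReal
        ((∑' i : I, Real.exp (θ * (x i : ℝ))) *
          Real.exp (-(α * θ - 2 * (Real.cosh θ - 1)) * (t : ℝ))) := by
  set μ := α * θ - 2 * (Real.cosh θ - 1)
  rw [ofPred_exists, ← tsum_mul_right,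
    ENNReal.ofReal_tsum_of_nonneg (fun i => by positivity) (hφ.mul_right _)]
  calc ℙ (⋃ i, {ω | ∃ s : ℝ≥0, t ≤ s ∧ α * (s : ℝ) ≤ (ζ i s ω : ℝ)})
      ≤ ∑' i, ℙ {ω | ∃ s : ℝ≥0, t ≤ s ∧ α * (s : ℝ) ≤ (ζ i s ω : ℝ)} := measure_iUnion_le _
    _ ≤ ∑' i, ENNReal.ofReal (Real.exp (θ * (x i : ℝ)) * Real.exp (-μ * t)) :=
        ENNReal.tsum_le_tsum fun i =>
          measure_exists_line_le_le_of_martingale_exp hθ.le hμ.le (hrc i) (h0 i) (hM i) t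

/-- **Lemma 1(a) of Bérard–Ramírez.** For a countable family of adapted,
right-continuous `ℤ`-valued processes `ζ^i` started at `x_i ≤ 0`, each carrying
the exponential martingale `exp (θ ζ^i_s - 2(cosh θ - 1) s)`, with
`φ := Σ_i e^{θ x_i} < ∞` and `μ := α θ - 2 (cosh θ - 1) > 0`, the probability
that some process reaches the line of slope `α` at some time `s ≥ t` is at most
`φ e^{-μ t}`. -/
theorem stmt_1
    {Ω : Type*} {mΩ : MeasurableSpace Ω} {ℙ : Measure Ω} [IsProbabilityMeasure ℙ]
    (𝓕 : Filtration ℝ≥0 mΩ)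
    {I : Type*} [Countable I]
    (θ α : ℝ) (hθ : 0 < θ) (hα : 0 < α)
    (hμ : 0 < α * θ - 2 * (Real.cosh θ - 1))
    (ζ : I → ℝ≥0 → Ω → ℤ)
    (hadapt : ∀ i : I, Adapted 𝓕 (ζ i))
    (hrc : ∀ i : I, ∀ ω : Ω, ∀ s : ℝ≥0,
      ContinuousWithinAt (fun u => ζ i u ω) (Set.Ici s) s)
    (x : I → ℤ) (hx : ∀ i, x i ≤ 0)
    (h0 : ∀ i : I, ∀ᵐ ω ∂ℙ, ζ i 0 ω = x i)
    (hφ : Summable (fun i => Real.exp (θ * (x i : ℝ))))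
    (hM : ∀ i : I, Martingale
      (fun (s : ℝ≥0) (ω : Ω) =>
        Real.exp (θ * (ζ i s ω : ℝ) - 2 * (Real.cosh θ - 1) * (s : ℝ))) 𝓕 ℙ)
    (t : ℝ≥0) :
    ℙ {ω | ∃ i : I, ∃ s : ℝ≥0, t ≤ s ∧ α * (s : ℝ) ≤ (ζ i s ω : ℝ)} ≤
      ENNReal.ofReal
        ((∑' i : I, Real.exp (θ * (x i : ℝ))) *
          Real.exp (-(α * θ - 2 * (Real.cosh θ - 1)) * (t : ℝ))) :=
  stmt_1_general 𝓕 θ α hθ hμ ζ hrc x h0 hφ hM t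
end

section
/- Let (F_s)_{s≥0} be a filtration on a probability space, let I be a countable index set, and for each i ∈ I let (W^i_s)_{s≥0} be an (F_s)-adapted ℤ-valued process with right-continuous sample paths and W^i_0 = x_i almost surely, where the x_i are integers with Σ_{i∈I} e^{θ x_i} < ∞. Let θ > 0 and α > 0 satisfy 2(cosh θ − 1) ≤ αθ, and assume that for each i the process exp(θ W^i_s − 2(cosh θ − 1)s) is an (F_s)-martingale. Let T be an (F_s)-stopping time, let m ≥ 0, and let R be a random variable such that R ≥ α T + m almost surely on the event {T < ∞}. Then E[ Σ_{i∈I} exp(−θ(R − W^i_T)) · 1_{T<∞} ] ≤ e^{−θm} Σ_{i∈I} e^{θ x_i}. -/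
/-!
Each `exp (θ W^i_s - 2 (cosh θ - 1) s)` is a nonnegative martingale with right-continuous paths.
Approximating `T` from above by the bounded dyadic stopping times `min (⌈2ⁿ T⌉ / 2ⁿ) n`, optional
stopping in discrete time together with Fatou's lemma (right-continuity identifies the pointwise
limit on `{T < ∞}`) bounds its expectation at time `T` on `{T < ∞}` by `e^{θ x_i}`. On that event,
`2 (cosh θ - 1) ≤ α θ` and `R ≥ α T + m` give
`exp (-θ (R - W^i_T)) ≤ e^{-θ m} exp (θ W^i_T - 2 (cosh θ - 1) T)`, and one sums over `i`.
-/

open MeasureTheory Filter Topology Set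
open scoped NNReal ENNReal

lemma tendsto_nat_ceil_mul_two_pow_div (t : ℝ≥0) :
    Tendsto (fun n : ℕ => (⌈t * 2 ^ n⌉₊ : ℝ≥0) / 2 ^ n) atTop (𝓝[≥] t) := by
  have h2 : ∀ n : ℕ, (0 : ℝ≥0) < 2 ^ n := fun n => by positivity
  have lower : ∀ n : ℕ, t ≤ (⌈t * 2 ^ n⌉₊ : ℝ≥0) / 2 ^ n := fun n =>
    (le_div_iff₀ (h2 n)).2 (Nat.le_ceil _)
  have upper : ∀ n : ℕ, (⌈t * 2 ^ n⌉₊ : ℝ≥0) / 2 ^ n ≤ t + (1 / 2) ^ n := fun n => by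
    rw [div_le_iff₀ (h2 n), add_mul, div_pow, one_pow, div_mul_cancel₀ _ (h2 n).ne']
    exact (Nat.ceil_lt_add_one (by positivity)).le
  have hupper : Tendsto (fun n : ℕ => t + (1 / 2 : ℝ≥0) ^ n) atTop (𝓝 t) := by
    simpa using tendsto_const_nhds.add
      (NNReal.tendsto_pow_atTop_nhds_zero_of_lt_one (r := 1 / 2) (by norm_num))
  exact tendsto_nhdsWithin_iff.2 ⟨tendsto_of_tendsto_of_tendsto_of_le_of_le tendsto_const_nhds
    hupper lower upper, Eventually.of_forall lower⟩

section

variable {Ω : Type*} {mΩ : MeasurableSpace Ω}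

namespace MeasureTheory.Filtration

noncomputable def dyadic (𝓕 : Filtration ℝ≥0 mΩ) (n : ℕ) : Filtration ℕ mΩ where
  seq k := 𝓕 (k / 2 ^ n)
  mono' _ _ hkl := 𝓕.mono (by gcongr)
  le' _ := 𝓕.le _

end MeasureTheory.Filtration

/-- The index `k` of the first dyadic time `k / 2 ^ n ≥ T ω`, capped at `n * 2 ^ n` so that it is
a bounded stopping time (also when `T ω = ∞`). -/
noncomputable def dyadicIndex (T : Ω → ℝ≥0∞) (n : ℕ) (ω : Ω) : ℕ :=
  if T ω ≤ n then ⌈(T ω).toNNReal * 2 ^ n⌉₊ else n * 2 ^ n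

noncomputable def dyadicTime (T : Ω → ℝ≥0∞) (n : ℕ) (ω : Ω) : ℝ≥0 := dyadicIndex T n ω / 2 ^ n

section Dyadic

variable {T : Ω → ℝ≥0∞}

lemma dyadicIndex_le (n : ℕ) (ω : Ω) : dyadicIndex T n ω ≤ n * 2 ^ n := by
  unfold dyadicIndex
  split_ifs with h
  · have : (T ω).toNNReal ≤ n := by
      simpa using (ENNReal.toNNReal_le_toNNReal (ne_top_of_le_ne_top (by simp) h) (by simp)).2 h
    exact Nat.ceil_le.2 (by push_cast; gcongr)
  · exact le_rfl

lemma dyadicIndex_le_iff {n k : ℕ} (hk : k < n * 2 ^ n) (ω : Ω) :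
    dyadicIndex T n ω ≤ k ↔ T ω ≤ ((k / 2 ^ n : ℝ≥0) : ℝ≥0∞) := by
  have h2 : (0 : ℝ≥0) < 2 ^ n := by positivity
  have hkn : ((k / 2 ^ n : ℝ≥0) : ℝ≥0∞) < n := by
    rw [← ENNReal.coe_natCast, ENNReal.coe_lt_coe, div_lt_iff₀ h2]
    exact_mod_cast hk
  unfold dyadicIndex
  split_ifs with h
  · have hT : T ω = (T ω).toNNReal := (ENNReal.coe_toNNReal (ne_top_of_le_ne_top (by simp) h)).symm
    rw [Nat.ceil_le, ← le_div_iff₀ h2, hT, ENNReal.coe_le_coe, ENNReal.toNNReal_coe]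
  · exact iff_of_false (by omega) fun h' => h (h'.trans hkn.le)

lemma isStoppingTime_dyadicIndex {𝓕 : Filtration ℝ≥0 mΩ}
    (hT : ∀ t : ℝ≥0, MeasurableSet[𝓕 t] {ω | T ω ≤ t}) (n : ℕ) :
    IsStoppingTime (𝓕.dyadic n) (fun ω => (dyadicIndex T n ω : WithTop ℕ)) := by
  intro k
  change MeasurableSet[𝓕 (k / 2 ^ n)] {ω | (dyadicIndex T n ω : WithTop ℕ) ≤ k}
  simp only [Nat.cast_le]
  by_cases hk : k < n * 2 ^ n
  · simp_rw [dyadicIndex_le_iff hk]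
    exact hT _
  · convert MeasurableSet.univ
    exact eq_univ_of_forall fun ω => (dyadicIndex_le n ω).trans (not_lt.1 hk)

lemma tendsto_dyadicTime {ω : Ω} (hω : T ω < ⊤) :
    Tendsto (fun n => dyadicTime T n ω) atTop (𝓝[≥] (T ω).toNNReal) := by
  refine (tendsto_nat_ceil_mul_two_pow_div _).congr' ?_
  filter_upwards [eventually_ge_atTop ⌈(T ω).toNNReal⌉₊] with n hn
  have : T ω ≤ n := by
    rw [← ENNReal.coe_toNNReal hω.ne, ← ENNReal.coe_natCast, ENNReal.coe_le_coe]
    exact (Nat.le_ceil _).trans (by exact_mod_cast hn)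
  rw [dyadicTime, dyadicIndex, if_pos this]

end Dyadic

lemma Real.exp_neg_mul_sub_le {θ α c t m R w : ℝ} (hθ : 0 ≤ θ) (hc : c ≤ α * θ) (ht : 0 ≤ t)
    (hR : α * t + m ≤ R) :
    Real.exp (-θ * (R - w)) ≤ Real.exp (-θ * m) * Real.exp (θ * w - c * t) := by
  rw [← Real.exp_add]
  exact Real.exp_le_exp.2 (by nlinarith [mul_le_mul_of_nonneg_right hc ht])

lemma measurableSet_lt_top_of_forall_le {T : Ω → ℝ≥0∞}
    (hT : ∀ t : ℝ≥0, MeasurableSet {ω | T ω ≤ t}) : MeasurableSet {ω | T ω < ⊤} := by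
  have : {ω | T ω < ⊤} = ⋃ n : ℕ, {ω | T ω ≤ (n : ℝ≥0)} := by
    ext ω
    simp only [mem_ofPred_eq, mem_iUnion, ENNReal.coe_natCast]
    exact ⟨fun h => (ENNReal.exists_nat_gt h.ne).imp fun _ => le_of_lt,
      fun ⟨n, hn⟩ => hn.trans_lt (ENNReal.natCast_lt_top n)⟩
  rw [this]
  exact .iUnion fun n => hT n

variable {μ : Measure Ω}

theorem MeasureTheory.Supermartingale.integral_stoppedValue_le {𝒢 : Filtration ℕ mΩ}
    [SigmaFiniteFiltration μ 𝒢] {f : ℕ → Ω → ℝ} (hf : Supermartingale f 𝒢 μ) {τ : Ω → ℕ∞}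
    (hτ : IsStoppingTime 𝒢 τ) {N : ℕ} (hbdd : ∀ ω, τ ω ≤ N) :
    ∫ ω, stoppedValue f τ ω ∂μ ≤ ∫ ω, f 0 ω ∂μ := by
  have h := hf.neg.expected_stoppedValue_mono (isStoppingTime_const 𝒢 0) hτ
    (fun _ => zero_le) hbdd
  change ∫ ω, -f 0 ω ∂μ ≤ ∫ ω, -stoppedValue f τ ω ∂μ at h
  rwa [integral_neg, integral_neg, neg_le_neg_iff] at h

theorem MeasureTheory.Supermartingale.dyadic {𝓕 : Filtration ℝ≥0 mΩ} {M : ℝ≥0 → Ω → ℝ}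
    (hM : Supermartingale M 𝓕 μ) (n : ℕ) :
    Supermartingale (fun k : ℕ => M (k / 2 ^ n)) (𝓕.dyadic n) μ :=
  ⟨fun k => hM.1 _, fun k l hkl => hM.2.1 _ _ (by gcongr), fun k => hM.2.2 _⟩

section RightContinuous

variable {𝓕 : Filtration ℝ≥0 mΩ} {M : ℝ≥0 → Ω → ℝ} {T : Ω → ℝ≥0∞}

lemma MeasureTheory.StronglyAdapted.measurable_stopped_dyadicTime (hM : StronglyAdapted 𝓕 M)
    (hT : ∀ t : ℝ≥0, MeasurableSet[𝓕 t] {ω | T ω ≤ t}) (n : ℕ) :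
    Measurable fun ω => M (dyadicTime T n ω) ω := by
  have hτ := isStoppingTime_dyadicIndex hT n
  have hprog : StronglyAdapted (𝓕.dyadic n) (fun k : ℕ => M (k / 2 ^ n)) := fun k => hM _
  exact (measurable_stoppedValue hprog.isStronglyProgressive_of_discrete hτ).mono
    hτ.measurableSpace_le le_rfl

lemma tendsto_stopped_dyadicTime {ω : Ω}
    (hrc : ∀ s, ContinuousWithinAt (fun u => M u ω) (Ici s) s) (hω : T ω < ⊤) :
    Tendsto (fun n => M (dyadicTime T n ω) ω) atTop (𝓝 (M (T ω).toNNReal ω)) :=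
  (hrc _).tendsto.comp (tendsto_dyadicTime hω)

lemma MeasureTheory.StronglyAdapted.aemeasurable_stopped (hM : StronglyAdapted 𝓕 M)
    (hrc : ∀ ω s, ContinuousWithinAt (fun u => M u ω) (Ici s) s)
    (hT : ∀ t : ℝ≥0, MeasurableSet[𝓕 t] {ω | T ω ≤ t}) :
    AEMeasurable (fun ω => M (T ω).toNNReal ω) (μ.restrict {ω | T ω < ⊤}) :=
  aemeasurable_of_tendsto_metrizable_ae atTop
    (fun n => (hM.measurable_stopped_dyadicTime hT n).aemeasurable)
    ((ae_restrict_iff' (measurableSet_lt_top_of_forall_le fun t => 𝓕.le t _ (hT t))).2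
      (ae_of_all _ fun ω => tendsto_stopped_dyadicTime (hrc ω)))

theorem MeasureTheory.Supermartingale.setLIntegral_stopped_le [IsFiniteMeasure μ]
    (hM : Supermartingale M 𝓕 μ) (hM_nonneg : ∀ s ω, 0 ≤ M s ω)
    (hrc : ∀ ω s, ContinuousWithinAt (fun u => M u ω) (Ici s) s)
    (hT : ∀ t : ℝ≥0, MeasurableSet[𝓕 t] {ω | T ω ≤ t}) :
    ∫⁻ ω in {ω | T ω < ⊤}, ENNReal.ofReal (M (T ω).toNNReal ω) ∂μ ≤
      ENNReal.ofReal (∫ ω, M 0 ω ∂μ) := by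
  set g : ℕ → Ω → ℝ≥0∞ := fun n ω => ENNReal.ofReal (M (dyadicTime T n ω) ω)
  have hg_meas : ∀ n, Measurable (g n) := fun n =>
    (hM.1.measurable_stopped_dyadicTime hT n).ennreal_ofReal
  have hg_le : ∀ n, ∫⁻ ω, g n ω ∂μ ≤ ENNReal.ofReal (∫ ω, M 0 ω ∂μ) := fun n => by
    have hτ := isStoppingTime_dyadicIndex hT n
    have hbdd : ∀ ω, (dyadicIndex T n ω : ℕ∞) ≤ (n * 2 ^ n : ℕ) := fun ω =>
      Nat.cast_le.2 (dyadicIndex_le n ω)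
    have hint : Integrable (fun ω => M (dyadicTime T n ω) ω) μ :=
      integrable_stoppedValue ℕ hτ (hM.dyadic n).2.2 hbdd
    have hle : ∫ ω, M (dyadicTime T n ω) ω ∂μ ≤ ∫ ω, M ((0 : ℕ) / 2 ^ n) ω ∂μ :=
      (hM.dyadic n).integral_stoppedValue_le hτ hbdd
    rw [Nat.cast_zero, zero_div] at hle
    rw [← ofReal_integral_eq_lintegral_ofReal hint (ae_of_all _ fun ω => hM_nonneg _ ω)]
    exact ENNReal.ofReal_le_ofReal hle
  calc ∫⁻ ω in {ω | T ω < ⊤}, ENNReal.ofReal (M (T ω).toNNReal ω) ∂μ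
      ≤ ∫⁻ ω in {ω | T ω < ⊤}, liminf (fun n => g n ω) atTop ∂μ :=
        setLIntegral_mono (Measurable.liminf hg_meas) fun ω hω =>
          ((ENNReal.continuous_ofReal.tendsto _).comp
            (tendsto_stopped_dyadicTime (hrc ω) hω)).liminf_eq.ge
    _ ≤ ∫⁻ ω, liminf (fun n => g n ω) atTop ∂μ := setLIntegral_le_lintegral _ _
    _ ≤ liminf (fun n => ∫⁻ ω, g n ω ∂μ) atTop := lintegral_liminf_le hg_meas
    _ ≤ ENNReal.ofReal (∫ ω, M 0 ω ∂μ) := liminf_le_of_frequently_le (.of_forall hg_le)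

end RightContinuous

lemma ContinuousWithinAt.exp_mul_intCast_sub {w : ℝ≥0 → ℤ} {A : Set ℝ≥0} {s : ℝ≥0}
    (hw : ContinuousWithinAt w A s) (θ c : ℝ) :
    ContinuousWithinAt (fun u => Real.exp (θ * w u - c * u)) A s :=
  (((continuous_of_discreteTopology.continuousAt.comp_continuousWithinAt hw).const_mul θ).sub
    (NNReal.continuous_coe.continuousWithinAt.const_mul c)).rexp

theorem MeasureTheory.Martingale.setLIntegral_exp_stopped_le [IsProbabilityMeasure μ]
    {𝓕 : Filtration ℝ≥0 mΩ} {W : ℝ≥0 → Ω → ℤ} {T : Ω → ℝ≥0∞} {θ c : ℝ} {x : ℤ}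
    (hM : Martingale (fun s ω => Real.exp (θ * W s ω - c * s)) 𝓕 μ)
    (hrc : ∀ ω s, ContinuousWithinAt (fun u => W u ω) (Ici s) s) (h0 : ∀ᵐ ω ∂μ, W 0 ω = x)
    (hT : ∀ t : ℝ≥0, MeasurableSet[𝓕 t] {ω | T ω ≤ t}) :
    ∫⁻ ω in {ω | T ω < ⊤},
        ENNReal.ofReal (Real.exp (θ * W (T ω).toNNReal ω - c * (T ω).toNNReal)) ∂μ ≤
      ENNReal.ofReal (Real.exp (θ * x)) := by
  have hM0 : ∫ ω, Real.exp (θ * W 0 ω - c * (0 : ℝ≥0)) ∂μ = Real.exp (θ * x) := by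
    rw [integral_congr_ae (g := fun _ => Real.exp (θ * x)) (h0.mono fun ω hω => by simp [hω])]
    simp
  rw [← hM0]
  exact hM.supermartingale.setLIntegral_stopped_le (fun _ _ => (Real.exp_pos _).le)
    (fun ω s => (hrc ω s).exp_mul_intCast_sub θ c) hT


end

theorem stmt_6_general
    {Ω : Type*} {mΩ : MeasurableSpace Ω} {ℙ : Measure Ω} [IsProbabilityMeasure ℙ]
    (𝓕 : Filtration ℝ≥0 mΩ)
    {I : Type*} [Countable I]
    (θ α : ℝ) (hθ : 0 < θ)
    (hθα : 2 * (Real.cosh θ - 1) ≤ α * θ)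
    (W : I → ℝ≥0 → Ω → ℤ)
    (hrc : ∀ i : I, ∀ ω : Ω, ∀ s : ℝ≥0,
      ContinuousWithinAt (fun u => W i u ω) (Set.Ici s) s)
    (x : I → ℤ)
    (h0 : ∀ i : I, ∀ᵐ ω ∂ℙ, W i 0 ω = x i)
    (hφ : Summable (fun i => Real.exp (θ * (x i : ℝ))))
    (hM : ∀ i : I, Martingale
      (fun (s : ℝ≥0) (ω : Ω) =>
        Real.exp (θ * (W i s ω : ℝ) - 2 * (Real.cosh θ - 1) * (s : ℝ))) 𝓕 ℙ)
    (T : Ω → ℝ≥0∞)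
    (hT : ∀ t : ℝ≥0, MeasurableSet[𝓕 t] {ω | T ω ≤ (t : ℝ≥0∞)})
    (m : ℝ)
    (R : Ω → ℝ)
    (hR : ∀ᵐ ω ∂ℙ, T ω < ⊤ → α * (T ω).toReal + m ≤ R ω) :
    ∫⁻ ω in {ω | T ω < ⊤},
        ∑' i : I,
          ENNReal.ofReal
            (Real.exp (-θ * (R ω - (W i (T ω).toNNReal ω : ℝ)))) ∂ℙ ≤
      ENNReal.ofReal
        (Real.exp (-θ * m) * ∑' i : I, Real.exp (θ * (x i : ℝ))) := by
  set c := 2 * (Real.cosh θ - 1)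
  set M : I → ℝ≥0 → Ω → ℝ := fun i s ω => Real.exp (θ * W i s ω - c * s)
  have hMT_meas : ∀ i, AEMeasurable (fun ω => ENNReal.ofReal (M i (T ω).toNNReal ω))
      (ℙ.restrict {ω | T ω < ⊤}) := fun i =>
    ((hM i).stronglyAdapted.aemeasurable_stopped
      (fun ω s => (hrc i ω s).exp_mul_intCast_sub θ c) hT).ennreal_ofReal
  have hpointwise : ∀ᵐ ω ∂ℙ, ω ∈ {ω | T ω < ⊤} →
      ∑' i, ENNReal.ofReal (Real.exp (-θ * (R ω - W i (T ω).toNNReal ω))) ≤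
        ENNReal.ofReal (Real.exp (-θ * m)) * ∑' i, ENNReal.ofReal (M i (T ω).toNNReal ω) := by
    filter_upwards [hR] with ω hω hωT
    rw [← ENNReal.tsum_mul_left]
    refine ENNReal.tsum_le_tsum fun i => ?_
    rw [← ENNReal.ofReal_mul (Real.exp_pos _).le]
    exact ENNReal.ofReal_le_ofReal
      (Real.exp_neg_mul_sub_le hθ.le hθα ENNReal.toReal_nonneg (hω hωT))
  calc _ ≤ ∫⁻ ω in {ω | T ω < ⊤},
        ENNReal.ofReal (Real.exp (-θ * m)) * ∑' i, ENNReal.ofReal (M i (T ω).toNNReal ω) ∂ℙ :=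
        setLIntegral_mono_ae ((AEMeasurable.tsum hMT_meas).const_mul _) hpointwise
    _ = ENNReal.ofReal (Real.exp (-θ * m)) *
          ∑' i, ∫⁻ ω in {ω | T ω < ⊤}, ENNReal.ofReal (M i (T ω).toNNReal ω) ∂ℙ := by
        rw [lintegral_const_mul' _ _ ENNReal.ofReal_ne_top, lintegral_tsum hMT_meas]
    _ ≤ ENNReal.ofReal (Real.exp (-θ * m)) * ∑' i, ENNReal.ofReal (Real.exp (θ * x i)) := by
        gcongr with i
        exact (hM i).setLIntegral_exp_stopped_le (hrc i) (h0 i) hT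
    _ = _ := by
        rw [← ENNReal.ofReal_tsum_of_nonneg (fun _ => (Real.exp_pos _).le) hφ,
          ENNReal.ofReal_mul (Real.exp_pos _).le]

/-- **Lemma 4 of Bérard–Ramírez.** For a countable family of adapted,
right-continuous `ℤ`-valued processes `W^i` started at `x_i` with
`Σ_i e^{θ x_i} < ∞`, each carrying the exponential martingale
`exp (θ W^i_s - 2 (cosh θ - 1) s)`, with `2 (cosh θ - 1) ≤ α θ`: if `T` is a
stopping time, `m ≥ 0`, and `R` is a random variable with `R ≥ α T + m` a.s. on
`{T < ∞}`, then `E[Σ_i exp (-θ (R - W^i_T)) 1_{T<∞}] ≤ e^{-θ m} Σ_i e^{θ x_i}`. -/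
theorem stmt_6
    {Ω : Type*} {mΩ : MeasurableSpace Ω} {ℙ : Measure Ω} [IsProbabilityMeasure ℙ]
    (𝓕 : Filtration ℝ≥0 mΩ)
    {I : Type*} [Countable I]
    (θ α : ℝ) (hθ : 0 < θ) (hα : 0 < α)
    (hθα : 2 * (Real.cosh θ - 1) ≤ α * θ)
    (W : I → ℝ≥0 → Ω → ℤ)
    (hadapt : ∀ i : I, Adapted 𝓕 (W i))
    (hrc : ∀ i : I, ∀ ω : Ω, ∀ s : ℝ≥0,
      ContinuousWithinAt (fun u => W i u ω) (Set.Ici s) s)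
    (x : I → ℤ)
    (h0 : ∀ i : I, ∀ᵐ ω ∂ℙ, W i 0 ω = x i)
    (hφ : Summable (fun i => Real.exp (θ * (x i : ℝ))))
    (hM : ∀ i : I, Martingale
      (fun (s : ℝ≥0) (ω : Ω) =>
        Real.exp (θ * (W i s ω : ℝ) - 2 * (Real.cosh θ - 1) * (s : ℝ))) 𝓕 ℙ)
    (T : Ω → ℝ≥0∞)
    (hT : ∀ t : ℝ≥0, MeasurableSet[𝓕 t] {ω | T ω ≤ (t : ℝ≥0∞)})
    (m : ℝ) (hm : 0 ≤ m)
    (R : Ω → ℝ)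
    (hR : ∀ᵐ ω ∂ℙ, T ω < ⊤ → α * (T ω).toReal + m ≤ R ω) :
    ∫⁻ ω in {ω | T ω < ⊤},
        ∑' i : I,
          ENNReal.ofReal
            (Real.exp (-θ * (R ω - (W i (T ω).toNNReal ω : ℝ)))) ∂ℙ ≤
      ENNReal.ofReal
        (Real.exp (-θ * m) * ∑' i : I, Real.exp (θ * (x i : ℝ))) :=
  stmt_6_general 𝓕 θ α hθ hθα W hrc x h0 hφ hM T hT m R hR
end

section
/- Let (Y_k)_{k≥0} be nonnegative random variables and let 𝔎 be a random variable with values in {1, 2, 3, …}, all on the same probability space. Assume there are constants d ∈ (0,1), C > 0 and a > 1 such that P(𝔎 > n) ≤ d^n for every n ≥ 1, and P(Y_k ≥ s and 𝔎 > k) ≤ C s^{−a} for every k ≥ 0 and every s > 0. Then there exists a constant C' > 0, depending only on d, C and a, such that for every t ≥ 1, P( Σ_{k=0}^{𝔎−1} Y_k ≥ t ) ≤ C' t^{(1−a)/2}. -/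
open MeasureTheory Filter
open scoped NNReal ENNReal

lemma aux_single_le_exp (x : ℝ) (hx : 0 ≤ x) (m : ℕ) : x ^ m / m.factorial ≤ Real.exp x := by
  have h := Real.sum_le_exp_of_nonneg hx (m + 1)
  refine le_trans ?_ h
  have hn : ∀ i ∈ Finset.range (m+1), (0:ℝ) ≤ x ^ i / i.factorial := by
    intro i _; positivity
  have hm : m ∈ Finset.range (m+1) := Finset.self_mem_range_succ m
  simpa using Finset.single_le_sum hn hm

lemma aux_poly_exp (lam : ℝ) (hlam : 0 < lam) (m : ℕ) (s : ℝ) (hs : 0 ≤ s) :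
    s ^ m * Real.exp (-(lam * s)) ≤ m.factorial / lam ^ m := by
  have h := aux_single_le_exp (lam * s) (by positivity) m
  rw [div_le_iff₀ (by positivity : (0:ℝ) < m.factorial)] at h
  rw [le_div_iff₀ (pow_pos hlam m)]
  have e1 : s ^ m * Real.exp (-(lam * s)) * lam ^ m
      = (lam * s) ^ m * Real.exp (-(lam * s)) := by rw [mul_pow]; ring
  rw [e1, Real.exp_neg, ← div_eq_mul_inv, div_le_iff₀ (Real.exp_pos _)]
  linarith

lemma aux_key (d C a : ℝ) (hd0 : 0 < d) (hd1 : d < 1) (hC : 0 < C) (ha : 1 < a)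
    (t : ℝ) (ht : 1 ≤ t) :
    d ^ (⌈Real.sqrt t⌉₊) + (⌈Real.sqrt t⌉₊ : ℝ) * (C * (t / ⌈Real.sqrt t⌉₊) ^ (-a))
      ≤ (((⌈a⌉₊.factorial : ℝ) / (-Real.log d) ^ ⌈a⌉₊) + C * 2 ^ (1 + a)) * t ^ ((1 - a) / 2) := by
  have ht0 : (0:ℝ) < t := by linarith
  set s := Real.sqrt t with hs_def
  have hs1 : (1:ℝ) ≤ s := by
    rw [show (1:ℝ) = Real.sqrt 1 from Real.sqrt_one.symm]
    exact Real.sqrt_le_sqrt ht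
  have hs0 : (0:ℝ) < s := by linarith
  set n := ⌈s⌉₊ with hn_def
  have hsn : s ≤ (n:ℝ) := Nat.le_ceil s
  have hn0 : (0:ℝ) < (n:ℝ) := lt_of_lt_of_le hs0 hsn
  have hn2 : (n:ℝ) ≤ 2 * s := by
    have := Nat.ceil_lt_add_one hs0.le
    linarith
  have hsr : s = t ^ ((1:ℝ)/2) := Real.sqrt_eq_rpow t
  set lam := -Real.log d with hlam_def
  have hlam : 0 < lam := by
    have := Real.log_neg hd0 hd1
    simp only [hlam_def]; linarith
  set m := ⌈a⌉₊ with hm_def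
  have ham : a ≤ (m:ℝ) := Nat.le_ceil a
  set K1 : ℝ := (m.factorial : ℝ) / lam ^ m with hK1_def
  set T : ℝ := t ^ ((1 - a) / 2) with hT_def
  have hT0 : 0 < T := Real.rpow_pos_of_pos ht0 _
  have hTs : T = s ^ (1 - a) := by
    rw [hT_def, hsr, ← Real.rpow_mul ht0.le]
    congr 1; ring
  -- part 1
  have part1 : d ^ n ≤ K1 * T := by
    have e1 : d ^ n = d ^ ((n:ℝ)) := (Real.rpow_natCast d n).symm
    have e2 : d ^ ((n:ℝ)) ≤ d ^ s := Real.rpow_le_rpow_of_exponent_ge hd0 hd1.le hsn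
    have e3 : d ^ s = Real.exp (-(lam * s)) := by
      rw [Real.rpow_def_of_pos hd0, hlam_def]; ring_nf
    set P : ℝ := s ^ (a - 1) with hP_def
    have hP : 0 < P := Real.rpow_pos_of_pos hs0 _
    have hPm : P ≤ s ^ (m:ℕ) := by
      rw [hP_def, ← Real.rpow_natCast s m]
      exact Real.rpow_le_rpow_of_exponent_le hs1 (by linarith)
    have h1 : Real.exp (-(lam * s)) * P ≤ K1 := by
      calc Real.exp (-(lam * s)) * P ≤ Real.exp (-(lam * s)) * s ^ (m:ℕ) :=
            mul_le_mul_of_nonneg_left hPm (Real.exp_pos _).le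
        _ = s ^ (m:ℕ) * Real.exp (-(lam * s)) := by ring
        _ ≤ K1 := aux_poly_exp lam hlam m s hs0.le
    have hTinv : T = P⁻¹ := by
      rw [hTs, hP_def, show (1:ℝ) - a = -(a - 1) by ring, Real.rpow_neg hs0.le]
    rw [e1]
    calc d ^ ((n:ℝ)) ≤ Real.exp (-(lam * s)) := by rw [← e3]; exact e2
      _ ≤ K1 * T := by
          rw [hTinv, ← div_eq_mul_inv, le_div_iff₀ hP]; exact h1
  -- part 2
  have part2 : (n:ℝ) * (C * (t / n) ^ (-a)) ≤ C * 2 ^ (1 + a) * T := by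
    have e4 : (t / (n:ℝ)) ^ (-a) = t ^ (-a) * (n:ℝ) ^ a := by
      rw [Real.div_rpow ht0.le (Nat.cast_nonneg n), Real.rpow_neg (Nat.cast_nonneg n),
        div_eq_mul_inv, inv_inv]
    have e5 : (n:ℝ) * (n:ℝ) ^ a = (n:ℝ) ^ ((1:ℝ) + a) := by
      rw [Real.rpow_add hn0, Real.rpow_one]
    have e6 : (n:ℝ) ^ ((1:ℝ) + a) ≤ (2 * s) ^ ((1:ℝ) + a) :=
      Real.rpow_le_rpow (Nat.cast_nonneg n) hn2 (by linarith)
    have e7 : (2 * s) ^ ((1:ℝ) + a) = 2 ^ ((1:ℝ) + a) * s ^ ((1:ℝ) + a) :=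
      Real.mul_rpow (by norm_num) hs0.le
    have e8 : s ^ ((1:ℝ) + a) * t ^ (-a) = T := by
      rw [hsr, ← Real.rpow_mul ht0.le, ← Real.rpow_add ht0, hT_def]
      ring_nf
    have ht_neg : (0:ℝ) ≤ t ^ (-a) := (Real.rpow_pos_of_pos ht0 _).le
    calc (n:ℝ) * (C * (t / n) ^ (-a)) = C * ((n:ℝ) * (n:ℝ) ^ a * t ^ (-a)) := by
          rw [e4]; ring
      _ = C * ((n:ℝ) ^ ((1:ℝ) + a) * t ^ (-a)) := by rw [e5]
      _ ≤ C * (2 ^ ((1:ℝ) + a) * s ^ ((1:ℝ) + a) * t ^ (-a)) := by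
          apply mul_le_mul_of_nonneg_left _ hC.le
          exact mul_le_mul_of_nonneg_right (by rw [← e7]; exact e6) ht_neg
      _ = C * 2 ^ ((1:ℝ) + a) * T := by rw [← e8]; ring
  linarith [part1, part2, mul_le_mul_of_nonneg_right (le_refl K1) hT0.le]

/-- **Tail-assembly bound (abstraction of (74)–(77) in the proof of
Proposition 4 of Bérard–Ramírez).** If `𝔎 ≥ 1` has a geometric tail
`P(𝔎 > n) ≤ d^n` and the nonnegative increments `Y_k` satisfy the polynomial
tail bound `P(Y_k ≥ s, 𝔎 > k) ≤ C s^{-a}` with `a > 1`, then there is a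
constant `C' > 0`, depending only on `d`, `C` and `a`, such that
`P(Σ_{k<𝔎} Y_k ≥ t) ≤ C' t^{(1-a)/2}` for all `t ≥ 1`. -/
theorem stmt_11
    (d C a : ℝ) (hd0 : 0 < d) (hd1 : d < 1) (hC : 0 < C) (ha : 1 < a) :
    ∃ C' : ℝ, 0 < C' ∧
      ∀ (Ω : Type) (mΩ : MeasurableSpace Ω) (ℙ : Measure Ω),
        IsProbabilityMeasure ℙ →
        ∀ (Y : ℕ → Ω → ℝ) (𝔎 : Ω → ℕ),
          (∀ k ω, 0 ≤ Y k ω) →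
          (∀ ω, 1 ≤ 𝔎 ω) →
          (∀ n : ℕ, 1 ≤ n → ℙ {ω | n < 𝔎 ω} ≤ ENNReal.ofReal (d ^ n)) →
          (∀ k : ℕ, ∀ s : ℝ, 0 < s →
            ℙ {ω | s ≤ Y k ω ∧ k < 𝔎 ω} ≤ ENNReal.ofReal (C * s ^ (-a))) →
          ∀ t : ℝ, 1 ≤ t →
            ℙ {ω | t ≤ ∑ k ∈ Finset.range (𝔎 ω), Y k ω} ≤
              ENNReal.ofReal (C' * t ^ ((1 - a) / 2)) := by
  have hlam : 0 < -Real.log d := by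
    have := Real.log_neg hd0 hd1; linarith
  refine ⟨((⌈a⌉₊.factorial : ℝ) / (-Real.log d) ^ ⌈a⌉₊) + C * 2 ^ (1 + a), ?_, ?_⟩
  · have h1 : (0:ℝ) < (⌈a⌉₊.factorial : ℝ) / (-Real.log d) ^ ⌈a⌉₊ := by positivity
    have h2 : (0:ℝ) < C * 2 ^ (1 + a) := by positivity
    linarith
  intro Ω mΩ ℙ hP Y 𝔎 hY h𝔎 hgeo htail t ht
  have ht0 : (0:ℝ) < t := by linarith
  set s := Real.sqrt t with hs_def
  have hs1 : (1:ℝ) ≤ s := by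
    rw [show (1:ℝ) = Real.sqrt 1 from Real.sqrt_one.symm]
    exact Real.sqrt_le_sqrt ht
  set n := ⌈s⌉₊ with hn_def
  have hn1 : 1 ≤ n := by
    have : (0:ℝ) < s := by linarith
    exact Nat.one_le_ceil_iff.mpr this
  have hsn : s ≤ (n:ℝ) := Nat.le_ceil s
  have hn0 : (0:ℝ) < (n:ℝ) := by positivity
  have hc0 : (0:ℝ) < t / n := by positivity
  -- set inclusion
  have hsub : {ω | t ≤ ∑ k ∈ Finset.range (𝔎 ω), Y k ω} ⊆
      {ω | n < 𝔎 ω} ∪ ⋃ k ∈ Finset.range n, {ω | t / n ≤ Y k ω ∧ k < 𝔎 ω} := by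
    intro ω hω
    simp only [Set.mem_setOf_eq] at hω
    by_cases hK : n < 𝔎 ω
    · exact Or.inl hK
    · push_neg at hK
      by_cases hex : ∃ k, k < n ∧ t / n ≤ Y k ω ∧ k < 𝔎 ω
      · right
        obtain ⟨k, hk, hk2⟩ := hex
        exact Set.mem_biUnion (Finset.mem_range.mpr hk) hk2
      · exfalso
        push_neg at hex
        have hlt : ∀ k ∈ Finset.range (𝔎 ω), Y k ω < t / n := by
          intro k hk
          have hk' := Finset.mem_range.mp hk
          have hkn : k < n := lt_of_lt_of_le hk' hK
          rcases lt_or_ge (Y k ω) (t / n) with h | h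
          · exact h
          · exact absurd hk' (not_lt.mpr (hex k hkn h))
        have hne : (Finset.range (𝔎 ω)).Nonempty := by
          rw [Finset.nonempty_range_iff]
          exact Nat.one_le_iff_ne_zero.mp (h𝔎 ω)
        have := Finset.sum_lt_sum_of_nonempty hne hlt
        rw [Finset.sum_const, Finset.card_range, nsmul_eq_mul] at this
        have hKn : (𝔎 ω : ℝ) ≤ (n : ℝ) := Nat.cast_le.mpr hK
        have : ∑ k ∈ Finset.range (𝔎 ω), Y k ω < t := by
          have h2 : (𝔎 ω : ℝ) * (t / n) ≤ (n : ℝ) * (t / n) :=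
            mul_le_mul_of_nonneg_right hKn hc0.le
          have h3 : (n : ℝ) * (t / n) = t := by field_simp
          linarith
        linarith
  -- measure bound
  have step1 : ℙ {ω | t ≤ ∑ k ∈ Finset.range (𝔎 ω), Y k ω} ≤
      ℙ {ω | n < 𝔎 ω} + ∑ k ∈ Finset.range n, ℙ {ω | t / n ≤ Y k ω ∧ k < 𝔎 ω} := by
    calc ℙ {ω | t ≤ ∑ k ∈ Finset.range (𝔎 ω), Y k ω}
        ≤ ℙ ({ω | n < 𝔎 ω} ∪ ⋃ k ∈ Finset.range n, {ω | t / n ≤ Y k ω ∧ k < 𝔎 ω}) :=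
          measure_mono hsub
      _ ≤ ℙ {ω | n < 𝔎 ω} + ℙ (⋃ k ∈ Finset.range n, {ω | t / n ≤ Y k ω ∧ k < 𝔎 ω}) :=
          measure_union_le _ _
      _ ≤ ℙ {ω | n < 𝔎 ω} + ∑ k ∈ Finset.range n, ℙ {ω | t / n ≤ Y k ω ∧ k < 𝔎 ω} := by
          gcongr
          exact measure_biUnion_finset_le _ _
  have step2 : ℙ {ω | t ≤ ∑ k ∈ Finset.range (𝔎 ω), Y k ω} ≤
      ENNReal.ofReal (d ^ n + (n : ℝ) * (C * (t / n) ^ (-a))) := by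
    have hsum : ∑ k ∈ Finset.range n, ℙ {ω | t / n ≤ Y k ω ∧ k < 𝔎 ω} ≤
        ENNReal.ofReal ((n : ℝ) * (C * (t / n) ^ (-a))) := by
      calc ∑ k ∈ Finset.range n, ℙ {ω | t / n ≤ Y k ω ∧ k < 𝔎 ω}
          ≤ ∑ _k ∈ Finset.range n, ENNReal.ofReal (C * (t / n) ^ (-a)) :=
            Finset.sum_le_sum fun k _ => htail k (t / n) hc0
        _ = n * ENNReal.ofReal (C * (t / n) ^ (-a)) := by
            rw [Finset.sum_const, Finset.card_range, nsmul_eq_mul]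
        _ = ENNReal.ofReal ((n : ℝ) * (C * (t / n) ^ (-a))) := by
            rw [ENNReal.ofReal_mul (Nat.cast_nonneg n), ENNReal.ofReal_natCast]
    calc ℙ {ω | t ≤ ∑ k ∈ Finset.range (𝔎 ω), Y k ω}
        ≤ ℙ {ω | n < 𝔎 ω} + ∑ k ∈ Finset.range n, ℙ {ω | t / n ≤ Y k ω ∧ k < 𝔎 ω} := step1
      _ ≤ ENNReal.ofReal (d ^ n) + ENNReal.ofReal ((n : ℝ) * (C * (t / n) ^ (-a))) :=
          add_le_add (hgeo n hn1) hsum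
      _ = ENNReal.ofReal (d ^ n + (n : ℝ) * (C * (t / n) ^ (-a))) := by
          rw [← ENNReal.ofReal_add (by positivity) (by positivity)]
  refine step2.trans (ENNReal.ofReal_le_ofReal ?_)
  exact aux_key d C a hd0 hd1 hC ha t ht
end
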